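/- For every value type v and every MiniJl type τ, declarative subtyping v ≤d τ holds if and only if the matching relation v ⋖ τ holds. -/
import Mathlib


/-- MiniJl types -/
inductive Ty : Type
  | pair : Ty → Ty → Ty
  | union : Ty → Ty → Ty
  | int : Ty
  | flt : Ty
  | cmplx : Ty
  | str : Ty
  | real : Ty
  | num : Ty
deriving DecidableEq

/-- Value types: concrete nominal types and pairs of value types. -/
inductive ValTy : Ty → Prop
  | int : ValTy .int
  | flt : ValTy .flt
  | cmplx : ValTy .cmplx
  | str : ValTy .str
  | pair {v1 v2 : Ty} : ValTy v1 → ValTy v2 → ValTy (.pair v1 v2)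

/-- Matching relation `v ⋖ τ`. -/
inductive Matches : Ty → Ty → Prop
  | int : Matches .int .int
  | flt : Matches .flt .flt
  | cmplx : Matches .cmplx .cmplx
  | str : Matches .str .str
  | intReal : Matches .int .real
  | fltReal : Matches .flt .real
  | intNum : Matches .int .num
  | fltNum : Matches .flt .num
  | cmplxNum : Matches .cmplx .num
  | pair {v1 v2 t1 t2 : Ty} : Matches v1 t1 → Matches v2 t2 →
      Matches (.pair v1 v2) (.pair t1 t2)
  | unionL {v t1 t2 : Ty} : Matches v t1 → Matches v (.union t1 t2)
  | unionR {v t1 t2 : Ty} : Matches v t2 → Matches v (.union t1 t2)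

/-- Matching-based semantic subtyping. -/
def SemSub (t1 t2 : Ty) : Prop :=
  ∀ v : Ty, ValTy v → Matches v t1 → Matches v t2

/-- Tag interpretation of types as sets of value types. -/
def interp : Ty → Set Ty
  | .int => {.int}
  | .flt => {.flt}
  | .cmplx => {.cmplx}
  | .str => {.str}
  | .real => {.int, .flt}
  | .num => {.int, .flt, .cmplx}
  | .pair t1 t2 => {v | ∃ v1 ∈ interp t1, ∃ v2 ∈ interp t2, v = .pair v1 v2}
  | .union t1 t2 => interp t1 ∪ interp t2

/-- Declarative subtyping. -/
inductive DeclSub : Ty → Ty → Prop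
  | refl (t : Ty) : DeclSub t t
  | trans {t1 t2 t3 : Ty} : DeclSub t1 t2 → DeclSub t2 t3 → DeclSub t1 t3
  | intReal : DeclSub .int .real
  | fltReal : DeclSub .flt .real
  | realNum : DeclSub .real .num
  | cmplxNum : DeclSub .cmplx .num
  | realUnion : DeclSub .real (.union .int .flt)
  | numUnion : DeclSub .num (.union .real .cmplx)
  | pair {t1 t2 t1' t2' : Ty} : DeclSub t1 t1' → DeclSub t2 t2' →
      DeclSub (.pair t1 t2) (.pair t1' t2')
  | unionL {t1 t2 t' : Ty} : DeclSub t1 t' → DeclSub t2 t' →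
      DeclSub (.union t1 t2) t'
  | unionR1 (t1 t2 : Ty) : DeclSub t1 (.union t1 t2)
  | unionR2 (t1 t2 : Ty) : DeclSub t2 (.union t1 t2)
  | distr1 (t11 t12 t2 : Ty) :
      DeclSub (.pair (.union t11 t12) t2)
        (.union (.pair t11 t2) (.pair t12 t2))
  | distr2 (t1 t21 t22 : Ty) :
      DeclSub (.pair t1 (.union t21 t22))
        (.union (.pair t1 t21) (.pair t1 t22))

/-- Normal form predicate. -/
inductive InNF : Ty → Prop
  | val {v : Ty} : ValTy v → InNF v
  | union {t1 t2 : Ty} : InNF t1 → InNF t2 → InNF (.union t1 t2)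

/-- Union of pairs -/
def unprs : Ty → Ty → Ty
  | .union t11 t12, t2 => .union (unprs t11 t2) (unprs t12 t2)
  | t1, .union t21 t22 => .union (unprs t1 t21) (unprs t1 t22)
  | t1, t2 => .pair t1 t2

/-- Normalization function. -/
def NF : Ty → Ty
  | .int => .int
  | .flt => .flt
  | .cmplx => .cmplx
  | .str => .str
  | .real => .union .int .flt
  | .num => .union (.union .int .flt) .cmplx
  | .pair t1 t2 => unprs (NF t1) (NF t2)
  | .union t1 t2 => .union (NF t1) (NF t2)

/-- Reductive subtyping. -/
inductive RedSub : Ty → Ty → Prop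
  | intRefl : RedSub .int .int
  | fltRefl : RedSub .flt .flt
  | cmplxRefl : RedSub .cmplx .cmplx
  | strRefl : RedSub .str .str
  | intReal : RedSub .int .real
  | fltReal : RedSub .flt .real
  | cmplxNum : RedSub .cmplx .num
  | intNum : RedSub .int .num
  | fltNum : RedSub .flt .num
  | pair {t1 t2 t1' t2' : Ty} : RedSub t1 t1' → RedSub t2 t2' →
      RedSub (.pair t1 t2) (.pair t1' t2')
  | unionL {t1 t2 t' : Ty} : RedSub t1 t' → RedSub t2 t' →
      RedSub (.union t1 t2) t'
  | unionR1 {t t1' t2' : Ty} : RedSub t t1' → RedSub t (.union t1' t2')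
  | unionR2 {t t1' t2' : Ty} : RedSub t t2' → RedSub t (.union t1' t2')
  | nf {t t' : Ty} : RedSub (NF t) t' → RedSub t t'

lemma matches_self {v : Ty} (hv : ValTy v) : Matches v v := by
  induction hv with
  | int => exact .int
  | flt => exact .flt
  | cmplx => exact .cmplx
  | str => exact .str
  | pair _ _ ih1 ih2 => exact .pair ih1 ih2

lemma declSub_sound {t1 t2 : Ty} (h : DeclSub t1 t2) : SemSub t1 t2 := by
  induction h with
  | refl => exact fun v _ hm => hm
  | trans _ _ ih1 ih2 => exact fun v hv hm => ih2 v hv (ih1 v hv hm)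
  | intReal => intro v _ hm; cases hm; exact .intReal
  | fltReal => intro v _ hm; cases hm; exact .fltReal
  | realNum =>
      intro v _ hm
      cases hm with
      | intReal => exact .intNum
      | fltReal => exact .fltNum
  | cmplxNum => intro v _ hm; cases hm; exact .cmplxNum
  | realUnion =>
      intro v _ hm
      cases hm with
      | intReal => exact .unionL .int
      | fltReal => exact .unionR .flt
  | numUnion =>
      intro v _ hm
      cases hm with
      | intNum => exact .unionL .intReal
      | fltNum => exact .unionL .fltReal
      | cmplxNum => exact .unionR .cmplx
  | pair _ _ ih1 ih2 =>
      intro v hv hm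
      cases hm with
      | pair h1 h2 =>
          cases hv with
          | pair hv1 hv2 => exact .pair (ih1 _ hv1 h1) (ih2 _ hv2 h2)
  | unionL _ _ ih1 ih2 =>
      intro v hv hm
      cases hm with
      | unionL h => exact ih1 v hv h
      | unionR h => exact ih2 v hv h
  | unionR1 => exact fun v _ hm => .unionL hm
  | unionR2 => exact fun v _ hm => .unionR hm
  | distr1 =>
      intro v _ hm
      cases hm with
      | pair h1 h2 =>
          cases h1 with
          | unionL h => exact .unionL (.pair h h2)
          | unionR h => exact .unionR (.pair h h2)
  | distr2 =>
      intro v _ hm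
      cases hm with
      | pair h1 h2 =>
          cases h2 with
          | unionL h => exact .unionL (.pair h1 h)
          | unionR h => exact .unionR (.pair h1 h)

theorem declSub_iff_matches (v t : Ty) (hv : ValTy v) :
    DeclSub v t ↔ Matches v t := by
  constructor
  · intro h
    exact declSub_sound h v hv (matches_self hv)
  · intro h
    clear hv
    induction h with
    | int => exact .refl _
    | flt => exact .refl _
    | cmplx => exact .refl _
    | str => exact .refl _
    | intReal => exact .intReal
    | fltReal => exact .fltReal
    | intNum => exact .trans .intReal .realNum
    | fltNum => exact .trans .fltReal .realNum
    | cmplxNum => exact .cmplxNum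
    | pair _ _ ih1 ih2 => exact .pair ih1 ih2
    | unionL _ ih => exact .trans ih (.unionR1 _ _)
    | unionR _ ih => exact .trans ih (.unionR2 _ _)
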